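/- arXiv:2004.05418 — 9 statements merged into one kernel-verified Lean document; each statement's English description precedes it below -/
import Mathlib

section
/- Let z_1, ..., z_N : [0,∞) → C^d be a differentiable solution of Subsystem A: ż_j = κ_0(⟨z_j, z_j⟩ z_c − ⟨z_c, z_j⟩ z_j) with ||z_j(0)|| = 1 for all j, where z_c = (1/N)∑_k z_k. Then for all indices i, j, the quantity 1 − ⟨z_i, z_j⟩ satisfies d/dt (1 − ⟨z_i, z_j⟩) = −κ_0 (1 − ⟨z_i, z_j⟩)(⟨z_i, z_c⟩ + ⟨z_c, z_j⟩). -/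
open scoped ComplexConjugate InnerProductSpace

/-!
Writing `V(w, z) = κ (⟪z, z⟫ w - ⟪w, z⟫ z)` for the right-hand side of Subsystem A (with `w = z_c`),
`⟪z, V(w, z)⟫ = κ ⟪z, z⟫ (⟪z, w⟫ - conj ⟪z, w⟫)` is purely imaginary, so `‖z_j‖` is conserved along the
flow. Once `⟪z_i, z_i⟫ = ⟪z_j, z_j⟫ = 1`, the product rule for `⟪z_i, z_j⟫` becomes an algebraic
identity that factors as `κ (1 - ⟪z_i, z_j⟫) (⟪z_i, z_c⟫ + ⟪z_c, z_j⟫)`.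
-/

variable {𝕜 E : Type*} [RCLike 𝕜] [NormedAddCommGroup E] [InnerProductSpace 𝕜 E]

variable (𝕜) in
def subsystemAField (κ : ℝ) (w z : E) : E :=
  (κ : 𝕜) • (⟪z, z⟫_𝕜 • w - ⟪w, z⟫_𝕜 • z)

lemma inner_subsystemAField_add_inner_subsystemAField (κ : ℝ) (w z : E) :
    ⟪z, subsystemAField 𝕜 κ w z⟫_𝕜 + ⟪subsystemAField 𝕜 κ w z, z⟫_𝕜 = 0 := by
  have hzz : conj ⟪z, z⟫_𝕜 = ⟪z, z⟫_𝕜 := inner_conj_symm _ _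
  have hwz : conj ⟪w, z⟫_𝕜 = ⟪z, w⟫_𝕜 := inner_conj_symm _ _
  simp only [subsystemAField, inner_smul_left, inner_smul_right, inner_sub_left, inner_sub_right,
    RCLike.conj_ofReal, hzz, hwz]
  ring

lemma inner_subsystemAField_add_inner_subsystemAField_of_norm_eq_one (κ : ℝ) (w : E) {a b : E}
    (ha : ‖a‖ = 1) (hb : ‖b‖ = 1) :
    ⟪a, subsystemAField 𝕜 κ w b⟫_𝕜 + ⟪subsystemAField 𝕜 κ w a, b⟫_𝕜
      = κ * (1 - ⟪a, b⟫_𝕜) * (⟪a, w⟫_𝕜 + ⟪w, b⟫_𝕜) := by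
  have haa : ⟪a, a⟫_𝕜 = 1 := by simp [inner_self_eq_norm_sq_to_K, ha]
  have hbb : ⟪b, b⟫_𝕜 = 1 := by simp [inner_self_eq_norm_sq_to_K, hb]
  have hwa : conj ⟪w, a⟫_𝕜 = ⟪a, w⟫_𝕜 := inner_conj_symm _ _
  simp only [subsystemAField, inner_smul_left, inner_smul_right, inner_sub_left, inner_sub_right,
    RCLike.conj_ofReal, map_one, hwa, haa, hbb]
  ring

variable [NormedSpace ℝ E]

lemma norm_eq_norm_zero_of_inner_add_inner_deriv_eq_zero {f f' : ℝ → E}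
    (hf : ∀ t, 0 ≤ t → HasDerivAt f (f' t) t)
    (horth : ∀ t, 0 ≤ t → ⟪f t, f' t⟫_𝕜 + ⟪f' t, f t⟫_𝕜 = 0) {t : ℝ} (ht : 0 ≤ t) :
    ‖f t‖ = ‖f 0‖ := by
  have hderiv : ∀ s, 0 ≤ s → HasDerivAt (fun s => ⟪f s, f s⟫_𝕜) 0 s := fun s hs =>
    horth s hs ▸ (hf s hs).inner 𝕜 (hf s hs)
  have hconst := constant_of_has_deriv_right_zero
    (fun s hs => (hderiv s hs.1).continuousAt.continuousWithinAt)
    (fun s hs => (hderiv s hs.1).hasDerivWithinAt) t (Set.right_mem_Icc.2 ht)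
  simp only [inner_self_eq_norm_sq_to_K] at hconst
  exact (pow_left_inj₀ (norm_nonneg _) (norm_nonneg _) two_ne_zero).1 (mod_cast hconst)

theorem stmt2_general (d N : ℕ) (κ₀ : ℝ)
    (z : Fin N → ℝ → EuclideanSpace ℂ (Fin d))
    (zc : ℝ → EuclideanSpace ℂ (Fin d))
    (hinit : ∀ j, ‖z j 0‖ = 1)
    (hode : ∀ (j : Fin N) (t : ℝ), 0 ≤ t → HasDerivAt (z j)
      ((κ₀ : ℂ) • ((inner ℂ (z j t) (z j t) : ℂ) • zc t
          - (inner ℂ (zc t) (z j t) : ℂ) • z j t)) t) :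
    ∀ (i j : Fin N) (t : ℝ), 0 ≤ t →
      HasDerivAt (fun s => (1 : ℂ) - (inner ℂ (z i s) (z j s) : ℂ))
        (-(κ₀ : ℂ) * ((1 : ℂ) - (inner ℂ (z i t) (z j t) : ℂ))
          * ((inner ℂ (z i t) (zc t) : ℂ) + (inner ℂ (zc t) (z j t) : ℂ))) t := by
  have hunit (j : Fin N) {t : ℝ} (ht : 0 ≤ t) : ‖z j t‖ = 1 :=
    (norm_eq_norm_zero_of_inner_add_inner_deriv_eq_zero (𝕜 := ℂ) (hode j)
      (fun s _ => inner_subsystemAField_add_inner_subsystemAField κ₀ (zc s) (z j s)) ht).trans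
      (hinit j)
  intro i j t ht
  refine (((hode i t ht).inner ℂ (hode j t ht)).const_sub 1).congr_deriv ?_
  rw [neg_mul, neg_mul, neg_inj]
  exact inner_subsystemAField_add_inner_subsystemAField_of_norm_eq_one (𝕜 := ℂ) κ₀ (zc t)
    (hunit i ht) (hunit j ht)

theorem stmt2 (d N : ℕ) (κ₀ : ℝ) (hκ : 0 < κ₀)
    (z : Fin N → ℝ → EuclideanSpace ℂ (Fin d))
    (zc : ℝ → EuclideanSpace ℂ (Fin d))
    (hzc : ∀ t : ℝ, zc t = (N : ℂ)⁻¹ • ∑ k, z k t)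
    (hinit : ∀ j, ‖z j 0‖ = 1)
    (hode : ∀ (j : Fin N) (t : ℝ), 0 ≤ t → HasDerivAt (z j)
      ((κ₀ : ℂ) • ((inner ℂ (z j t) (z j t) : ℂ) • zc t
          - (inner ℂ (zc t) (z j t) : ℂ) • z j t)) t) :
    ∀ (i j : Fin N) (t : ℝ), 0 ≤ t →
      HasDerivAt (fun s => (1 : ℂ) - (inner ℂ (z i s) (z j s) : ℂ))
        (-(κ₀ : ℂ) * ((1 : ℂ) - (inner ℂ (z i t) (z j t) : ℂ))
          * ((inner ℂ (z i t) (zc t) : ℂ) + (inner ℂ (zc t) (z j t) : ℂ))) t :=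
  stmt2_general d N κ₀ z zc hinit hode
end

section
/- Let z_1, ..., z_N : [0,∞) → C^d solve Subsystem A: ż_j = κ_0(⟨z_j, z_j⟩ z_c − ⟨z_c, z_j⟩ z_j) with unit-norm initial data, and suppose ⟨z_i(t), z_j(t)⟩ ≠ 1 for all relevant pairs and all t. Then for any indices i, j, k, l, the cross-ratio-like functional C_{ijkl}(t) = [(1 − ⟨z_i, z_j⟩)(1 − ⟨z_k, z_l⟩)] / [(1 − ⟨z_i, z_l⟩)(1 − ⟨z_k, z_j⟩)] is constant in time: C_{ijkl}(t) = C_{ijkl}(0) for all t ≥ 0. -/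
/-!
Write `g a b = 1 - ⟪z a, z b⟫`. The flow preserves `‖z a‖`, and once `⟪z a, z a⟫ = 1` the
derivative of `g a b` is `-(α a + β b) * g a b` with `α a = κ₀ ⟪z a, z_c⟫` and
`β b = κ₀ ⟪z_c, z b⟫`. The logarithmic derivatives of numerator and denominator of the cross
ratio are then both `-(α i + α k + β j + β l)`, so the cross ratio has zero derivative.
-/

open scoped InnerProductSpace

theorem eq_apply_zero_of_hasDerivAt_zero {F : Type*} [NormedAddCommGroup F] [NormedSpace ℝ F]
    {f : ℝ → F} (hf : ∀ t, 0 ≤ t → HasDerivAt f 0 t) {t : ℝ} (ht : 0 ≤ t) : f t = f 0 :=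
  constant_of_has_deriv_right_zero (fun s hs => (hf s hs.1).continuousAt.continuousWithinAt)
    (fun s hs => (hf s hs.1).hasDerivWithinAt) t ⟨ht, le_rfl⟩

section CrossRatio

variable {ι 𝕜 : Type*} [NontriviallyNormedField 𝕜] [NormedAlgebra ℝ 𝕜]

def crossRatio (g : ι → ι → 𝕜) (i j k l : ι) : 𝕜 :=
  g i j * g k l / (g i l * g k j)

theorem hasDerivAt_crossRatio_eq_zero {g : ι → ι → ℝ → 𝕜} {α β : ι → 𝕜} {t : ℝ}
    (hg : ∀ a b, HasDerivAt (g a b) (-(α a + β b) * g a b t) t) {i j k l : ι}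
    (hil : g i l t ≠ 0) (hkj : g k j t ≠ 0) :
    HasDerivAt (fun s => crossRatio (fun a b => g a b s) i j k l) 0 t := by
  refine (((hg i j).mul (hg k l)).div ((hg i l).mul (hg k j)) (mul_ne_zero hil hkj)).congr_deriv ?_
  simp only [Pi.mul_apply]
  exact div_eq_zero_iff.mpr (Or.inl (by ring))

end CrossRatio

section SphereFlow

variable {E : Type*} [NormedAddCommGroup E] [InnerProductSpace ℂ E]

/-- The right-hand side of Subsystem A, with `w` in the role of `z_c`. -/
noncomputable def sphereField (κ : ℝ) (w z : E) : E :=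
  (κ : ℂ) • (⟪z, z⟫_ℂ • w - ⟪w, z⟫_ℂ • z)

variable {κ : ℝ} {x y : ℝ → E}

theorem hasDerivAt_inner_of_sphereField {w : E} {t : ℝ}
    (hx : HasDerivAt x (sphereField κ w (x t)) t) (hy : HasDerivAt y (sphereField κ w (y t)) t) :
    HasDerivAt (fun s => ⟪x s, y s⟫_ℂ)
      (κ * (⟪x t, x t⟫_ℂ * ⟪w, y t⟫_ℂ + ⟪y t, y t⟫_ℂ * ⟪x t, w⟫_ℂ
        - (⟪x t, w⟫_ℂ + ⟪w, y t⟫_ℂ) * ⟪x t, y t⟫_ℂ)) t := by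
  refine (hx.inner ℂ hy).congr_deriv ?_
  simp only [sphereField, inner_sub_left, inner_sub_right, inner_smul_left, inner_smul_right,
    inner_conj_symm, Complex.conj_ofReal]
  ring

theorem inner_self_eq_one_of_sphereField {w : ℝ → E}
    (hx : ∀ t, 0 ≤ t → HasDerivAt x (sphereField κ (w t) (x t)) t) (hx₀ : ‖x 0‖ = 1)
    {t : ℝ} (ht : 0 ≤ t) : ⟪x t, x t⟫_ℂ = 1 := by
  have hconst : ∀ s, 0 ≤ s → HasDerivAt (fun s => ⟪x s, x s⟫_ℂ) 0 s := fun s hs =>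
    (hasDerivAt_inner_of_sphereField (hx s hs) (hx s hs)).congr_deriv (by ring)
  rw [eq_apply_zero_of_hasDerivAt_zero hconst ht, inner_self_eq_norm_sq_to_K, hx₀]
  norm_num

theorem hasDerivAt_one_sub_inner_of_sphereField {w : E} {t : ℝ}
    (hx : HasDerivAt x (sphereField κ w (x t)) t) (hy : HasDerivAt y (sphereField κ w (y t)) t)
    (hx₁ : ⟪x t, x t⟫_ℂ = 1) (hy₁ : ⟪y t, y t⟫_ℂ = 1) :
    HasDerivAt (fun s => 1 - ⟪x s, y s⟫_ℂ)
      (-(κ * ⟪x t, w⟫_ℂ + κ * ⟪w, y t⟫_ℂ) * (1 - ⟪x t, y t⟫_ℂ)) t := by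
  refine ((hasDerivAt_inner_of_sphereField hx hy).const_sub 1).congr_deriv ?_
  rw [hx₁, hy₁]
  ring

end SphereFlow

theorem stmt3_general (d N : ℕ) (κ₀ : ℝ)
    (z : Fin N → ℝ → EuclideanSpace ℂ (Fin d))
    (zc : ℝ → EuclideanSpace ℂ (Fin d))
    (hinit : ∀ j, ‖z j 0‖ = 1)
    (hode : ∀ (j : Fin N) (t : ℝ), 0 ≤ t → HasDerivAt (z j)
      ((κ₀ : ℂ) • ((inner ℂ (z j t) (z j t) : ℂ) • zc t
          - (inner ℂ (zc t) (z j t) : ℂ) • z j t)) t)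
    (i j k l : Fin N)
    (hne : ∀ t : ℝ, 0 ≤ t →
      (inner ℂ (z i t) (z j t) : ℂ) ≠ 1 ∧ (inner ℂ (z k t) (z l t) : ℂ) ≠ 1 ∧
      (inner ℂ (z i t) (z l t) : ℂ) ≠ 1 ∧ (inner ℂ (z k t) (z j t) : ℂ) ≠ 1) :
    ∀ t : ℝ, 0 ≤ t →
      ((1 : ℂ) - inner ℂ (z i t) (z j t)) * ((1 : ℂ) - inner ℂ (z k t) (z l t))
        / (((1 : ℂ) - inner ℂ (z i t) (z l t)) * ((1 : ℂ) - inner ℂ (z k t) (z j t)))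
      = ((1 : ℂ) - inner ℂ (z i 0) (z j 0)) * ((1 : ℂ) - inner ℂ (z k 0) (z l 0))
        / (((1 : ℂ) - inner ℂ (z i 0) (z l 0)) * ((1 : ℂ) - inner ℂ (z k 0) (z j 0))) := by
  have hunit : ∀ a t, 0 ≤ t → ⟪z a t, z a t⟫_ℂ = 1 := fun a _ ht =>
    inner_self_eq_one_of_sphereField (hode a) (hinit a) ht
  have hcross : ∀ t, 0 ≤ t →
      HasDerivAt (fun s => crossRatio (fun a b => 1 - ⟪z a s, z b s⟫_ℂ) i j k l) 0 t := by
    intro t ht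
    obtain ⟨-, -, hil, hkj⟩ := hne t ht
    exact hasDerivAt_crossRatio_eq_zero (g := fun a b s => 1 - ⟪z a s, z b s⟫_ℂ)
      (α := fun a => κ₀ * ⟪z a t, zc t⟫_ℂ) (β := fun b => κ₀ * ⟪zc t, z b t⟫_ℂ)
      (fun a b => hasDerivAt_one_sub_inner_of_sphereField (hode a t ht) (hode b t ht)
        (hunit a t ht) (hunit b t ht))
      (sub_ne_zero.mpr hil.symm) (sub_ne_zero.mpr hkj.symm)
  exact fun t ht => eq_apply_zero_of_hasDerivAt_zero hcross ht

theorem stmt3 (d N : ℕ) (κ₀ : ℝ)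
    (z : Fin N → ℝ → EuclideanSpace ℂ (Fin d))
    (zc : ℝ → EuclideanSpace ℂ (Fin d))
    (hzc : ∀ t : ℝ, zc t = (N : ℂ)⁻¹ • ∑ k, z k t)
    (hinit : ∀ j, ‖z j 0‖ = 1)
    (hode : ∀ (j : Fin N) (t : ℝ), 0 ≤ t → HasDerivAt (z j)
      ((κ₀ : ℂ) • ((inner ℂ (z j t) (z j t) : ℂ) • zc t
          - (inner ℂ (zc t) (z j t) : ℂ) • z j t)) t)
    (i j k l : Fin N)
    (hne : ∀ t : ℝ, 0 ≤ t →
      (inner ℂ (z i t) (z j t) : ℂ) ≠ 1 ∧ (inner ℂ (z k t) (z l t) : ℂ) ≠ 1 ∧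
      (inner ℂ (z i t) (z l t) : ℂ) ≠ 1 ∧ (inner ℂ (z k t) (z j t) : ℂ) ≠ 1) :
    ∀ t : ℝ, 0 ≤ t →
      ((1 : ℂ) - inner ℂ (z i t) (z j t)) * ((1 : ℂ) - inner ℂ (z k t) (z l t))
        / (((1 : ℂ) - inner ℂ (z i t) (z l t)) * ((1 : ℂ) - inner ℂ (z k t) (z j t)))
      = ((1 : ℂ) - inner ℂ (z i 0) (z j 0)) * ((1 : ℂ) - inner ℂ (z k 0) (z l 0))
        / (((1 : ℂ) - inner ℂ (z i 0) (z l 0)) * ((1 : ℂ) - inner ℂ (z k 0) (z j 0))) :=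
  stmt3_general d N κ₀ z zc hinit hode i j k l hne
end

section
/- Let z_1, ..., z_N : [0,∞) → C^d solve Subsystem A: ż_j = κ_0(⟨z_j, z_j⟩ z_c − ⟨z_c, z_j⟩ z_j) with ||z_j(t)|| = 1 for all t, and set ρ(t) = ||z_c(t)||. Then d(ρ²)/dt = (2κ_0/N) ∑_{i=1}^N (ρ² − Re(⟨z_i, z_c⟩²)) ≥ 0; in particular ρ is non-decreasing. -/
/-!
Differentiating `‖z_c‖² = ⟪z_c, z_c⟫` along the averaged vector field gives
`2 Re ⟪z_c, ż_c⟫`; on unit vectors each summand contributes `‖z_c‖² - Re(⟪z_i, z_c⟫²)`,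
which is nonnegative because `Re(w²) ≤ |w|²` and Cauchy–Schwarz gives `|⟪z_i, z_c⟫| ≤ ‖z_c‖`.
-/

open scoped InnerProductSpace
open Finset

variable {E : Type*} [NormedAddCommGroup E] [InnerProductSpace ℂ E]

theorem HasDerivAt.norm_sq_of_complex {f : ℝ → E} {f' : E} {t : ℝ} (hf : HasDerivAt f f' t) :
    HasDerivAt (‖f ·‖ ^ 2) (2 * (⟪f t, f'⟫_ℂ).re) t := by
  let := InnerProductSpace.complexToReal (G := E)
  simpa only [real_inner_eq_re_inner ℂ, RCLike.re_to_complex] using hf.norm_sq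

theorem re_inner_sq_le (x y : E) : (⟪x, y⟫_ℂ ^ 2).re ≤ ‖x‖ ^ 2 * ‖y‖ ^ 2 :=
  calc (⟪x, y⟫_ℂ ^ 2).re ≤ ‖⟪x, y⟫_ℂ‖ ^ 2 := by
        rw [← norm_pow]; exact Complex.re_le_norm _
    _ ≤ (‖x‖ * ‖y‖) ^ 2 := by gcongr; exact norm_inner_le_norm x y
    _ = ‖x‖ ^ 2 * ‖y‖ ^ 2 := mul_pow _ _ _

theorem re_inner_sq_comm (x y : E) : (⟪x, y⟫_ℂ ^ 2).re = (⟪y, x⟫_ℂ ^ 2).re := by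
  rw [← inner_conj_symm, ← map_pow, Complex.conj_re]

theorem re_inner_inner_self_smul_sub (c x : E) :
    (⟪c, ⟪x, x⟫_ℂ • c - ⟪c, x⟫_ℂ • x⟫_ℂ).re = ‖x‖ ^ 2 * ‖c‖ ^ 2 - (⟪x, c⟫_ℂ ^ 2).re := by
  rw [inner_sub_right, inner_smul_right, inner_smul_right, Complex.sub_re, re_inner_sq_comm x c,
    ← sq]
  simp only [inner_self_eq_norm_sq_to_K]
  norm_cast

theorem re_inner_centroid_drift {ι : Type*} [Fintype ι] (N : ℕ) (κ : ℝ) (c : E) (x : ι → E)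
    (hx : ∀ i, ‖x i‖ = 1) :
    (⟪c, (N : ℂ)⁻¹ • ∑ i, (κ : ℂ) • (⟪x i, x i⟫_ℂ • c - ⟪c, x i⟫_ℂ • x i)⟫_ℂ).re
      = κ / N * ∑ i, (‖c‖ ^ 2 - (⟪x i, c⟫_ℂ ^ 2).re) := by
  have hcoeff : (N : ℂ)⁻¹ * κ = ((κ / N : ℝ) : ℂ) := by push_cast; ring
  simp only [inner_smul_right, inner_sum, ← mul_sum, ← mul_assoc, hcoeff, Complex.re_ofReal_mul,
    Complex.re_sum, re_inner_inner_self_smul_sub, hx, one_pow, one_mul]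

theorem stmt4 (d N : ℕ) (κ₀ : ℝ) (hκ : 0 < κ₀)
    (z : Fin N → ℝ → EuclideanSpace ℂ (Fin d))
    (zc : ℝ → EuclideanSpace ℂ (Fin d))
    (hzc : ∀ t : ℝ, zc t = (N : ℂ)⁻¹ • ∑ k, z k t)
    (hnorm : ∀ (j : Fin N) (t : ℝ), 0 ≤ t → ‖z j t‖ = 1)
    (hode : ∀ (j : Fin N) (t : ℝ), 0 ≤ t → HasDerivAt (z j)
      ((κ₀ : ℂ) • ((inner ℂ (z j t) (z j t) : ℂ) • zc t
          - (inner ℂ (zc t) (z j t) : ℂ) • z j t)) t) :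
    ∀ t : ℝ, 0 ≤ t →
      HasDerivAt (fun s => ‖zc s‖ ^ 2)
        ((2 * κ₀ / N) * ∑ i, (‖zc t‖ ^ 2 - (((inner ℂ (z i t) (zc t) : ℂ)) ^ 2).re)) t ∧
      0 ≤ (2 * κ₀ / N) * ∑ i, (‖zc t‖ ^ 2 - (((inner ℂ (z i t) (zc t) : ℂ)) ^ 2).re) := by
  intro t ht
  have hzc_deriv : HasDerivAt zc ((N : ℂ)⁻¹ • ∑ j, (κ₀ : ℂ) • (⟪z j t, z j t⟫_ℂ • zc t
      - ⟪zc t, z j t⟫_ℂ • z j t)) t :=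
    ((HasDerivAt.fun_sum (u := univ) fun j _ => hode j t ht).const_smul
      ((N : ℂ)⁻¹)).congr_of_eventuallyEq (.of_forall hzc)
  refine ⟨?_, ?_⟩
  · convert hzc_deriv.norm_sq_of_complex using 1
    rw [re_inner_centroid_drift N κ₀ (zc t) (z · t) (hnorm · t ht)]
    ring
  · refine mul_nonneg (by positivity) (sum_nonneg fun i _ => sub_nonneg.2 ?_)
    simpa [hnorm i t ht] using re_inner_sq_le (z i t) (zc t)
end

section
/- Let z_1, ..., z_N : [0,∞) → C^d solve Subsystem A with ||z_j(t)|| = 1 for all t. If ⟨z_i(t), z_j(t)⟩ ≠ 1, then d/dt ln|1 − ⟨z_i, z_j⟩| = −(κ_0/2)(⟨z_c, z_i + z_j⟩ + ⟨z_i + z_j, z_c⟩) = −κ_0 Re⟨z_i + z_j, z_c⟩. -/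
/-!
For unit vectors the flow gives `d/dt ⟨z_i, z_j⟩ = κ₀ (1 - ⟨z_i, z_j⟩) (⟨z_i, z_c⟩ + ⟨z_c, z_j⟩)`,
so `f = 1 - ⟨z_i, z_j⟩` satisfies a linear equation `f' = f w`. Then
`(log ‖f‖)' = Re (f' / f) = Re w`, and `Re w = -κ₀ Re ⟨z_i + z_j, z_c⟩` because
`Re ⟨z_j, z_c⟩ = Re ⟨z_c, z_j⟩`.
-/

open scoped InnerProductSpace

theorem HasDerivAt.log_norm {F : Type*} [NormedAddCommGroup F] [InnerProductSpace ℝ F]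
    {f : ℝ → F} {f' : F} {x : ℝ} (hf : HasDerivAt f f' x) (hx : f x ≠ 0) :
    HasDerivAt (fun y => Real.log ‖f y‖) (⟪f x, f'⟫_ℝ / ‖f x‖ ^ 2) x := by
  have hlog : (fun y => Real.log ‖f y‖) = fun y => Real.log (‖f y‖ ^ 2) / 2 := by
    ext y
    rw [Real.log_pow]
    push_cast
    ring
  rw [hlog]
  exact ((hf.norm_sq.log (by positivity)).div_const 2).congr_deriv (by ring)

theorem HasDerivAt.log_norm_of_eq_mul {f : ℝ → ℂ} {w : ℂ} {x : ℝ}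
    (hf : HasDerivAt f (f x * w) x) (hx : f x ≠ 0) :
    HasDerivAt (fun y => Real.log ‖f y‖) w.re x := by
  convert hf.log_norm hx using 1
  have hsq : ‖f x‖ ^ 2 ≠ 0 := by positivity
  rw [Complex.inner, mul_right_comm, Complex.mul_conj, Complex.normSq_eq_norm_sq,
    Complex.re_ofReal_mul]
  field_simp

section

variable {𝕜 E : Type*} [RCLike 𝕜] [NormedAddCommGroup E] [InnerProductSpace 𝕜 E]

theorem inner_add_inner_of_flow (κ : ℝ) (c : E) {a b : E} (ha : ‖a‖ = 1) (hb : ‖b‖ = 1) :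
    ⟪a, (κ : 𝕜) • (⟪b, b⟫_𝕜 • c - ⟪c, b⟫_𝕜 • b)⟫_𝕜 + ⟪(κ : 𝕜) • (⟪a, a⟫_𝕜 • c - ⟪c, a⟫_𝕜 • a), b⟫_𝕜
      = (1 - ⟪a, b⟫_𝕜) * ((κ : 𝕜) * (⟪a, c⟫_𝕜 + ⟪c, b⟫_𝕜)) := by
  have haa : ⟪a, a⟫_𝕜 = 1 := by rw [inner_self_eq_norm_sq_to_K, ha]; simp
  have hbb : ⟪b, b⟫_𝕜 = 1 := by rw [inner_self_eq_norm_sq_to_K, hb]; simp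
  simp only [inner_smul_left, inner_smul_right, inner_sub_left, inner_sub_right,
    RCLike.conj_ofReal, haa, hbb, inner_conj_symm, map_one]
  ring

theorem hasDerivAt_one_sub_inner_of_flow [NormedSpace ℝ E] (κ : ℝ) (c : E) {u v : ℝ → E}
    {t : ℝ} (hu : HasDerivAt u ((κ : 𝕜) • (⟪u t, u t⟫_𝕜 • c - ⟪c, u t⟫_𝕜 • u t)) t)
    (hv : HasDerivAt v ((κ : 𝕜) • (⟪v t, v t⟫_𝕜 • c - ⟪c, v t⟫_𝕜 • v t)) t)
    (hu₁ : ‖u t‖ = 1) (hv₁ : ‖v t‖ = 1) :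
    HasDerivAt (fun s => 1 - ⟪u s, v s⟫_𝕜)
      ((1 - ⟪u t, v t⟫_𝕜) * -((κ : 𝕜) * (⟪u t, c⟫_𝕜 + ⟪c, v t⟫_𝕜))) t :=
  ((hasDerivAt_const t 1).sub (hu.inner 𝕜 hv)).congr_deriv <| by
    rw [inner_add_inner_of_flow κ c hu₁ hv₁]
    ring

end

theorem stmt6_general (d N : ℕ) (κ₀ : ℝ)
    (z : Fin N → ℝ → EuclideanSpace ℂ (Fin d))
    (zc : ℝ → EuclideanSpace ℂ (Fin d))
    (hnorm : ∀ (j : Fin N) (t : ℝ), 0 ≤ t → ‖z j t‖ = 1)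
    (hode : ∀ (j : Fin N) (t : ℝ), 0 ≤ t → HasDerivAt (z j)
      ((κ₀ : ℂ) • ((inner ℂ (z j t) (z j t) : ℂ) • zc t
          - (inner ℂ (zc t) (z j t) : ℂ) • z j t)) t)
    (i j : Fin N) (t : ℝ) (ht : 0 ≤ t)
    (hne : (inner ℂ (z i t) (z j t) : ℂ) ≠ 1) :
    HasDerivAt (fun s => Real.log ‖(1 : ℂ) - inner ℂ (z i s) (z j s)‖)
      (-κ₀ * ((inner ℂ (z i t + z j t) (zc t) : ℂ)).re) t := by
  have hflow := hasDerivAt_one_sub_inner_of_flow (𝕜 := ℂ) κ₀ (zc t) (hode i t ht) (hode j t ht)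
    (hnorm i t ht) (hnorm j t ht)
  convert hflow.log_norm_of_eq_mul (sub_ne_zero.mpr hne.symm) using 1
  have hsymm : (inner ℂ (z j t) (zc t)).re = (inner ℂ (zc t) (z j t)).re :=
    inner_re_symm (𝕜 := ℂ) _ _
  rw [inner_add_left, Complex.add_re, hsymm]
  simp [Complex.mul_re]

theorem stmt6 (d N : ℕ) (κ₀ : ℝ)
    (z : Fin N → ℝ → EuclideanSpace ℂ (Fin d))
    (zc : ℝ → EuclideanSpace ℂ (Fin d))
    (hzc : ∀ t : ℝ, zc t = (N : ℂ)⁻¹ • ∑ k, z k t)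
    (hnorm : ∀ (j : Fin N) (t : ℝ), 0 ≤ t → ‖z j t‖ = 1)
    (hode : ∀ (j : Fin N) (t : ℝ), 0 ≤ t → HasDerivAt (z j)
      ((κ₀ : ℂ) • ((inner ℂ (z j t) (z j t) : ℂ) • zc t
          - (inner ℂ (zc t) (z j t) : ℂ) • z j t)) t)
    (i j : Fin N) (t : ℝ) (ht : 0 ≤ t)
    (hne : (inner ℂ (z i t) (z j t) : ℂ) ≠ 1) :
    HasDerivAt (fun s => Real.log ‖(1 : ℂ) - inner ℂ (z i s) (z j s)‖)
      (-κ₀ * ((inner ℂ (z i t + z j t) (zc t) : ℂ)).re) t :=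
  stmt6_general d N κ₀ z zc hnorm hode i j t ht hne
end

section
/- Let z_1, ..., z_N : [0,∞) → C^d solve Subsystem A with unit-norm initial data, and assume λ_M(0) := max_{i≠j} |1 − ⟨z_i(0), z_j(0)⟩| < 1/2 and κ_0 > 0. Then for all i, j and all t ≥ 0: |1 − ⟨z_i(t), z_j(t)⟩| ≤ |1 − ⟨z_i(0), z_j(0)⟩| · exp(−κ_0(1 − 2λ_M(0)) t). In particular the configuration aggregates completely and exponentially fast. -/
open Set
open scoped InnerProductSpace

/-! The disagreements `h_ij = 1 - ⟪z_i, z_j⟫` obey the linear equation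
`h_ij' = -κ (⟪z_c, z_j⟫ + ⟪z_i, z_c⟫) h_ij`, since the flow conserves `‖z_k‖ = 1`. As long as
every `‖h_kl‖` stays below `μ`, each `Re ⟪z_k, z_l⟫ ≥ 1 - μ`, so after averaging the coefficient has
real part at least `2 (1 - μ)` and `‖h_ij‖` decays like `exp (-2κ (1 - μ) t)`; in particular it
stays below `λ`. A continuous induction with `μ = λ + 1/2 < 1` keeps all `‖h_kl‖ < μ` for all
time, and for this `μ` the rate `2 (1 - μ)` is exactly `1 - 2λ`. -/

lemma forall_lt_of_continuousOn_Ici {ι : Type*} [Finite ι] {u : ι → ℝ → ℝ} {μ : ℝ}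
    (hu : ∀ i, ContinuousOn (u i) (Ici 0))
    (hstep : ∀ b, 0 ≤ b → (∀ s ∈ Ico 0 b, ∀ i, u i s < μ) → ∀ i, u i b < μ) :
    ∀ t, 0 ≤ t → ∀ i, u i t < μ := by
  by_contra! hbad
  set B := ⋃ i, Ici (0 : ℝ) ∩ u i ⁻¹' Ici μ
  have hB : IsClosed B := isClosed_iUnion_of_finite fun i =>
    (hu i).preimage_isClosed_of_isClosed isClosed_Ici isClosed_Ici
  have hne : B.Nonempty := by
    obtain ⟨t, ht, i, hi⟩ := hbad
    exact ⟨t, mem_iUnion.2 ⟨i, ht, hi⟩⟩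
  have hbdd : BddBelow B := ⟨0, fun t ht => (mem_iUnion.1 ht).choose_spec.1⟩
  obtain ⟨i, hτ0, hτ⟩ := mem_iUnion.1 (hB.csInf_mem hne hbdd)
  refine (hstep _ (mem_Ici.1 hτ0) (fun s hs j => ?_) i).not_ge hτ
  by_contra! hj
  exact notMem_of_lt_csInf hs.2 hbdd (mem_iUnion.2 ⟨j, hs.1, hj⟩)

lemma norm_le_mul_exp_of_hasDerivAt_mul {f g : ℝ → ℂ} {ρ b : ℝ} (hb : 0 ≤ b)
    (hf : ∀ s ∈ Icc 0 b, HasDerivAt f (g s * f s) s) (hg : ∀ s ∈ Ioo 0 b, (g s).re ≤ ρ) :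
    ‖f b‖ ≤ ‖f 0‖ * Real.exp (ρ * b) := by
  set φ : ℝ → ℝ := fun s => ‖f s‖ ^ 2 * Real.exp (-(2 * ρ) * s)
  have hφ : ∀ s ∈ Icc 0 b,
      HasDerivAt φ (2 * ((g s).re - ρ) * (‖f s‖ ^ 2 * Real.exp (-(2 * ρ) * s))) s := by
    intro s hs
    refine ((hf s hs).norm_sq.mul ((hasDerivAt_id' s).const_mul (-(2 * ρ))).exp).congr_deriv ?_
    rw [Complex.inner, ← Complex.normSq_eq_norm_sq, Complex.normSq_apply]
    simp only [Complex.mul_re, Complex.mul_im, Complex.conj_re, Complex.conj_im]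
    ring
  have hanti : AntitoneOn φ (Icc 0 b) := by
    refine antitoneOn_of_deriv_nonpos (convex_Icc 0 b)
      (fun s hs => (hφ s hs).continuousAt.continuousWithinAt) (fun s hs => ?_) fun s hs => ?_ <;>
      rw [interior_Icc] at hs
    · exact (hφ s (Ioo_subset_Icc_self hs)).differentiableAt.differentiableWithinAt
    · rw [(hφ s (Ioo_subset_Icc_self hs)).deriv]
      exact mul_nonpos_of_nonpos_of_nonneg (by linarith [hg s hs]) (by positivity)
  have hsq : ‖f b‖ ^ 2 ≤ (‖f 0‖ * Real.exp (ρ * b)) ^ 2 := by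
    calc ‖f b‖ ^ 2 = φ b * Real.exp (2 * ρ * b) := by
          rw [mul_assoc, ← Real.exp_add]; ring_nf; simp
      _ ≤ φ 0 * Real.exp (2 * ρ * b) := by
          gcongr
          exact hanti (left_mem_Icc.2 hb) (right_mem_Icc.2 hb) hb
      _ = _ := by
          simp only [φ, mul_zero, Real.exp_zero, mul_one, mul_pow, ← Real.exp_nat_mul]
          ring_nf
  exact (pow_le_pow_iff_left₀ (norm_nonneg _) (by positivity) two_ne_zero).1 hsq

section Lohe

variable {E : Type*} [NormedAddCommGroup E] [InnerProductSpace ℂ E]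

/-- The right-hand side of Subsystem A: `ż_j = loheField κ z_c z_j`. -/
noncomputable def loheField (κ : ℝ) (c x : E) : E := (κ : ℂ) • (⟪x, x⟫_ℂ • c - ⟪c, x⟫_ℂ • x)

lemma inner_add_inner_loheField (κ : ℝ) (c x y : E) :
    ⟪x, loheField κ c y⟫_ℂ + ⟪loheField κ c x, y⟫_ℂ
      = κ * (⟪x, x⟫_ℂ * ⟪c, y⟫_ℂ + ⟪y, y⟫_ℂ * ⟪x, c⟫_ℂ - (⟪x, c⟫_ℂ + ⟪c, y⟫_ℂ) * ⟪x, y⟫_ℂ) := by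
  simp only [loheField, inner_smul_left, inner_smul_right, inner_sub_left, inner_sub_right,
    inner_conj_symm, Complex.conj_ofReal]
  ring

lemma hasDerivAt_inner_self_loheField {κ : ℝ} {c : E} {x : ℝ → E} {t : ℝ}
    (hx : HasDerivAt x (loheField κ c (x t)) t) : HasDerivAt (fun s => ⟪x s, x s⟫_ℂ) 0 t := by
  refine (hx.inner ℂ hx).congr_deriv ?_
  rw [inner_add_inner_loheField]
  ring

lemma inner_self_eq_of_loheField {κ : ℝ} {c x : ℝ → E}
    (hx : ∀ t, 0 ≤ t → HasDerivAt x (loheField κ (c t) (x t)) t) {t : ℝ} (ht : 0 ≤ t) :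
    ⟪x t, x t⟫_ℂ = ⟪x 0, x 0⟫_ℂ :=
  constant_of_has_deriv_right_zero
    (fun s hs => (hasDerivAt_inner_self_loheField (hx s hs.1)).continuousAt.continuousWithinAt)
    (fun s hs => (hasDerivAt_inner_self_loheField (hx s hs.1)).hasDerivWithinAt) t ⟨ht, le_rfl⟩

lemma hasDerivAt_one_sub_inner_loheField {κ : ℝ} {c : E} {x y : ℝ → E} {t : ℝ}
    (hx : HasDerivAt x (loheField κ c (x t)) t) (hy : HasDerivAt y (loheField κ c (y t)) t)
    (hx1 : ⟪x t, x t⟫_ℂ = 1) (hy1 : ⟪y t, y t⟫_ℂ = 1) :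
    HasDerivAt (fun s => 1 - ⟪x s, y s⟫_ℂ)
      (-κ * (⟪c, y t⟫_ℂ + ⟪x t, c⟫_ℂ) * (1 - ⟪x t, y t⟫_ℂ)) t := by
  refine ((hx.inner ℂ hy).const_sub 1).congr_deriv ?_
  rw [neg_eq_iff_eq_neg, inner_add_inner_loheField, hx1, hy1]
  ring

lemma le_re_inner_mean {ι : Type*} [Fintype ι] [Nonempty ι] {x : ι → E} {y : E} {a : ℝ}
    (h : ∀ k, a ≤ (⟪x k, y⟫_ℂ).re) :
    a ≤ (⟪(Fintype.card ι : ℂ)⁻¹ • ∑ k, x k, y⟫_ℂ).re := by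
  have hcard : (0 : ℝ) < Fintype.card ι := by exact_mod_cast Fintype.card_pos
  have hmean : (⟪(Fintype.card ι : ℂ)⁻¹ • ∑ k, x k, y⟫_ℂ).re
      = (Fintype.card ι : ℝ)⁻¹ * ∑ k, (⟪x k, y⟫_ℂ).re := by
    simp [Complex.re_sum, mul_comm]
  rw [hmean, le_inv_mul_iff₀ hcard]
  simpa using Finset.card_nsmul_le_sum Finset.univ _ a fun k _ => h k

lemma two_mul_one_sub_le_re_inner_mean_add {ι : Type*} [Fintype ι] {x : ι → E} {c : E} {μ : ℝ}
    (hc : c = (Fintype.card ι : ℂ)⁻¹ • ∑ k, x k) (h : ∀ k l, ‖1 - ⟪x k, x l⟫_ℂ‖ ≤ μ) (i j : ι) :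
    2 * (1 - μ) ≤ (⟪c, x j⟫_ℂ + ⟪x i, c⟫_ℂ).re := by
  have : Nonempty ι := ⟨i⟩
  have hre : ∀ k l, 1 - μ ≤ (⟪x k, x l⟫_ℂ).re := fun k l => by
    have := (Complex.re_le_norm _).trans (h k l)
    rw [Complex.sub_re, Complex.one_re] at this
    linarith
  rw [Complex.add_re, ← inner_conj_symm (x i) c, Complex.conj_re, hc]
  linarith [le_re_inner_mean (hre · j), le_re_inner_mean (hre · i)]

lemma norm_one_sub_inner_le_of_loheField {ι : Type*} [Fintype ι] {κ μ b : ℝ} {z : ι → ℝ → E}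
    {c : ℝ → E} (hκ : 0 ≤ κ) (hc : ∀ t, c t = (Fintype.card ι : ℂ)⁻¹ • ∑ k, z k t)
    (hnorm : ∀ j, ‖z j 0‖ = 1)
    (hz : ∀ j t, 0 ≤ t → HasDerivAt (z j) (loheField κ (c t) (z j t)) t) (hb : 0 ≤ b)
    (hμ : ∀ s ∈ Ioo 0 b, ∀ k l, ‖1 - ⟪z k s, z l s⟫_ℂ‖ ≤ μ) (i j : ι) :
    ‖1 - ⟪z i b, z j b⟫_ℂ‖ ≤ ‖1 - ⟪z i 0, z j 0⟫_ℂ‖ * Real.exp (-κ * (2 * (1 - μ)) * b) := by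
  have hunit : ∀ j t, 0 ≤ t → ⟪z j t, z j t⟫_ℂ = 1 := fun j t ht => by
    rw [inner_self_eq_of_loheField (hz j) ht, inner_self_eq_norm_sq_to_K, hnorm]
    norm_num
  refine norm_le_mul_exp_of_hasDerivAt_mul (f := fun s => 1 - ⟪z i s, z j s⟫_ℂ) hb
    (fun s hs => hasDerivAt_one_sub_inner_loheField (hz i s hs.1) (hz j s hs.1)
      (hunit i s hs.1) (hunit j s hs.1)) fun s hs => ?_
  have := two_mul_one_sub_le_re_inner_mean_add (hc s) (hμ s hs) i j
  simp only [Complex.mul_re, Complex.neg_re, Complex.ofReal_re, Complex.neg_im, Complex.ofReal_im,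
    neg_zero, zero_mul, sub_zero]
  nlinarith

end Lohe

theorem stmt7 (d N : ℕ) (κ₀ : ℝ) (hκ : 0 < κ₀)
    (z : Fin N → ℝ → EuclideanSpace ℂ (Fin d))
    (zc : ℝ → EuclideanSpace ℂ (Fin d))
    (hzc : ∀ t : ℝ, zc t = (N : ℂ)⁻¹ • ∑ k, z k t)
    (hinit : ∀ j, ‖z j 0‖ = 1)
    (hode : ∀ (j : Fin N) (t : ℝ), 0 ≤ t → HasDerivAt (z j)
      ((κ₀ : ℂ) • ((inner ℂ (z j t) (z j t) : ℂ) • zc t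
          - (inner ℂ (zc t) (z j t) : ℂ) • z j t)) t)
    (lamM : ℝ)
    (hlamM : IsGreatest
      {x : ℝ | ∃ i j : Fin N, i ≠ j ∧ x = ‖(1 : ℂ) - inner ℂ (z i 0) (z j 0)‖}
      lamM)
    (hsmall : lamM < 1 / 2) :
    ∀ (i j : Fin N) (t : ℝ), 0 ≤ t →
      ‖(1 : ℂ) - inner ℂ (z i t) (z j t)‖
        ≤ ‖(1 : ℂ) - inner ℂ (z i 0) (z j 0)‖
          * Real.exp (-κ₀ * (1 - 2 * lamM) * t) := by
  obtain ⟨⟨i₀, j₀, -, hlam₀⟩, hlam⟩ := hlamM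
  have hlam0 : 0 ≤ lamM := hlam₀ ▸ norm_nonneg _
  have hmean : ∀ t, zc t = (Fintype.card (Fin N) : ℂ)⁻¹ • ∑ k, z k t := by simpa using hzc
  have h0 : ∀ k l, ‖1 - ⟪z k 0, z l 0⟫_ℂ‖ ≤ lamM := by
    intro k l
    rcases eq_or_ne k l with rfl | hkl
    · rw [inner_self_eq_norm_sq_to_K, hinit]
      simpa using hlam0
    · exact hlam ⟨k, l, hkl, rfl⟩
  have hbound : ∀ t, 0 ≤ t → ∀ kl : Fin N × Fin N,
      ‖1 - ⟪z kl.1 t, z kl.2 t⟫_ℂ‖ < lamM + 1 / 2 := by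
    refine forall_lt_of_continuousOn_Ici (fun kl t ht => ?_) fun b hb hlt kl => ?_
    · exact (continuousAt_const.sub ((hode _ t ht).continuousAt.inner (𝕜 := ℂ)
        (hode _ t ht).continuousAt)).norm.continuousWithinAt
    · have hexp : Real.exp (-κ₀ * (2 * (1 - (lamM + 1 / 2))) * b) ≤ 1 :=
        Real.exp_le_one_iff.2 <| by
          nlinarith [mul_nonneg (mul_nonneg hκ.le (sub_nonneg.2 hsmall.le)) hb]
      calc _ ≤ ‖1 - ⟪z kl.1 0, z kl.2 0⟫_ℂ‖ * Real.exp (-κ₀ * (2 * (1 - (lamM + 1 / 2))) * b) :=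
            norm_one_sub_inner_le_of_loheField hκ.le hmean hinit hode hb
              (fun s hs k l => (hlt s (Ioo_subset_Ico_self hs) (k, l)).le) _ _
        _ ≤ lamM * 1 := mul_le_mul (h0 _ _) hexp (by positivity) hlam0
        _ < _ := by linarith
  intro i j t ht
  convert norm_one_sub_inner_le_of_loheField hκ.le hmean hinit hode ht
    (fun s hs k l => (hbound s hs.1.le (k, l)).le) i j using 4
  ring
end

section
/- Suppose real-valued functions J, I satisfy d/dt (J² + I²) ≤ −(α − β)(J² + I²) where α − β ≥ 2κ_0(1 − 2λ) and λ(t) = sqrt(I(t)² + J(t)²) with λ(0) < 1/2 and κ_0 > 0. Then λ(t) ≤ λ(0) / [2((1/2 − λ(0)) e^{κ_0 t} + λ(0))] ≤ λ(0) for all t ≥ 0, and consequently J(t)² + I(t)² ≤ (J(0)² + I(0)²) e^{−2κ_0(1 − 2λ(0)) t}. -/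
/-!
While `λ = √f` (with `f = J² + I²`) stays below `1/2`, the differential inequality makes `f`
nonincreasing, so `λ` can never reach `1/2` and `λ(t) ≤ λ(0)` for all `t ≥ 0`. Then
`f' ≤ -2κ₀(1 - 2λ(0)) f` and Grönwall gives the exponential bound. For the sharper logistic
bound, `u = 1/λ - 2` satisfies the linear inequality `u' ≥ κ₀ u`, so `e^{-κ₀ t} u(t)` is
nondecreasing; this is the comparison with the logistic equation `λ' = -κ₀ (1 - 2λ) λ`.
-/

open Real Set

lemma antitoneOn_of_hasDerivAt_nonpos {D : Set ℝ} (hD : Convex ℝ D) {f f' : ℝ → ℝ}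
    (hf : ∀ x ∈ D, HasDerivAt f (f' x) x) (hf' : ∀ x ∈ interior D, f' x ≤ 0) :
    AntitoneOn f D :=
  antitoneOn_of_hasDerivWithinAt_nonpos hD (fun x hx => (hf x hx).continuousAt.continuousWithinAt)
    (fun x hx => (hf x (interior_subset hx)).hasDerivWithinAt) hf'

lemma monotoneOn_of_hasDerivAt_nonneg {D : Set ℝ} (hD : Convex ℝ D) {f f' : ℝ → ℝ}
    (hf : ∀ x ∈ D, HasDerivAt f (f' x) x) (hf' : ∀ x ∈ interior D, 0 ≤ f' x) :
    MonotoneOn f D :=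
  monotoneOn_of_hasDerivWithinAt_nonneg hD (fun x hx => (hf x hx).continuousAt.continuousWithinAt)
    (fun x hx => (hf x (interior_subset hx)).hasDerivWithinAt) hf'

lemma lt_of_hasDerivAt_nonpos_of_lt {f f' : ℝ → ℝ} {a c : ℝ}
    (hf : ∀ x ∈ Ici a, HasDerivAt f (f' x) x) (hf' : ∀ x ∈ Ici a, f x < c → f' x ≤ 0)
    (ha : f a < c) : ∀ x ∈ Ici a, f x < c := by
  by_contra! hcross
  set S := Ici a ∩ f ⁻¹' Ici c
  have hbdd : BddBelow S := ⟨a, fun x hx => hx.1⟩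
  have hclosed : IsClosed S := ContinuousOn.preimage_isClosed_of_isClosed
    (fun x hx => (hf x hx).continuousAt.continuousWithinAt) isClosed_Ici isClosed_Ici
  -- `m` is the first time at which `f` reaches `c`
  obtain ⟨ham, hcm⟩ : sInf S ∈ S := hclosed.csInf_mem hcross hbdd
  set m := sInf S
  have hbelow : ∀ x ∈ Ico a m, f x < c := fun x hx =>
    not_le.1 fun hcx => hx.2.not_ge (csInf_le hbdd ⟨hx.1, hcx⟩)
  have hanti : AntitoneOn f (Icc a m) :=
    antitoneOn_of_hasDerivAt_nonpos (convex_Icc a m) (fun x hx => hf x hx.1) fun x hx => by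
      rw [interior_Icc] at hx
      exact hf' x hx.1.le (hbelow x (Ioo_subset_Ico_self hx))
  exact (hanti (left_mem_Icc.2 ham) (right_mem_Icc.2 ham) ham |>.trans_lt ha).not_ge hcm

lemma antitoneOn_of_hasDerivAt_nonpos_of_lt {f f' : ℝ → ℝ} {a c : ℝ}
    (hf : ∀ x ∈ Ici a, HasDerivAt f (f' x) x) (hf' : ∀ x ∈ Ici a, f x < c → f' x ≤ 0)
    (ha : f a < c) : AntitoneOn f (Ici a) :=
  antitoneOn_of_hasDerivAt_nonpos (convex_Ici a) hf fun x hx =>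
    hf' x (interior_subset hx) (lt_of_hasDerivAt_nonpos_of_lt hf hf' ha x (interior_subset hx))

section LogisticInequality

variable {κ : ℝ} {f D : ℝ → ℝ}

theorem antitoneOn_of_logistic_inequality (hκ : 0 ≤ κ)
    (hD : ∀ t, 0 ≤ t → HasDerivAt f (D t) t)
    (hineq : ∀ t, 0 ≤ t → D t ≤ -2 * κ * (1 - 2 * √(f t)) * √(f t) ^ 2)
    (h0 : √(f 0) < 1 / 2) : AntitoneOn f (Ici 0) := by
  have hsqrt_lt {x : ℝ} : √x < 1 / 2 ↔ x < 1 / 4 := by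
    rw [sqrt_lt' one_half_pos]; norm_num
  refine antitoneOn_of_hasDerivAt_nonpos_of_lt hD (fun t ht hft => ?_) (hsqrt_lt.1 h0)
  have : 0 ≤ κ * (1 - 2 * √(f t)) * √(f t) ^ 2 :=
    mul_nonneg (mul_nonneg hκ (by linarith [hsqrt_lt.2 hft])) (sq_nonneg _)
  linarith [hineq t ht]

theorem le_mul_exp_of_logistic_inequality (hκ : 0 ≤ κ)
    (hD : ∀ t, 0 ≤ t → HasDerivAt f (D t) t)
    (hineq : ∀ t, 0 ≤ t → D t ≤ -2 * κ * (1 - 2 * √(f t)) * √(f t) ^ 2)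
    (h0 : √(f 0) < 1 / 2) :
    ∀ t, 0 ≤ t → f t ≤ f 0 * exp (-2 * κ * (1 - 2 * √(f 0)) * t) := by
  intro t ht
  have hanti := antitoneOn_of_logistic_inequality hκ hD hineq h0
  have hbound : ∀ x ∈ Ico 0 t, D x ≤ -2 * κ * (1 - 2 * √(f 0)) * f x + 0 := by
    intro x hx
    have hdecr : √(f x) ≤ √(f 0) := sqrt_le_sqrt (hanti self_mem_Ici hx.1 hx.1)
    have hsq : f x ≤ √(f x) ^ 2 := sq_sqrt' (x := f x) ▸ le_max_left _ _
    have hc : 0 ≤ κ * (1 - 2 * √(f 0)) := mul_nonneg hκ (by linarith)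
    nlinarith [hineq x hx.1, mul_nonneg (mul_nonneg hκ (sq_nonneg (√(f x))))
      (sub_nonneg.2 hdecr)]
  have := le_gronwallBound_of_liminf_deriv_right_le
    (fun x hx => (hD x hx.1).continuousAt.continuousWithinAt)
    (fun x hx _ hr => (hD x hx.1).hasDerivWithinAt.liminf_right_slope_le hr)
    le_rfl hbound t ⟨ht, le_rfl⟩
  rwa [gronwallBound_ε0, sub_zero] at this

theorem monotoneOn_exp_mul_inv_sqrt_sub_two {t : ℝ}
    (hD : ∀ s, 0 ≤ s → HasDerivAt f (D s) s)
    (hineq : ∀ s, 0 ≤ s → D s ≤ -2 * κ * (1 - 2 * √(f s)) * √(f s) ^ 2)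
    (hpos : ∀ s ∈ Icc 0 t, 0 < f s) :
    MonotoneOn (fun s => exp (-κ * s) * ((√(f s))⁻¹ - 2)) (Icc 0 t) := by
  have hderiv : ∀ s ∈ Icc 0 t, HasDerivAt (fun s => exp (-κ * s) * ((√(f s))⁻¹ - 2))
      (exp (-κ * s) * ((-D s - 2 * κ * (1 - 2 * √(f s)) * √(f s) ^ 2) / (2 * √(f s) ^ 3))) s := by
    intro s hs
    have hsqrt := sqrt_pos.2 (hpos s hs)
    have hinv := ((hD s hs.1).sqrt (hpos s hs).ne').fun_inv hsqrt.ne'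
    exact (((hasDerivAt_id' s).const_mul (-κ)).exp.mul (hinv.sub_const 2)).congr_deriv
      (by field_simp; ring)
  refine monotoneOn_of_hasDerivAt_nonneg (convex_Icc 0 t) hderiv fun s hs => ?_
  rw [interior_Icc] at hs
  have hsqrt := sqrt_pos.2 (hpos s (Ioo_subset_Icc_self hs))
  exact mul_nonneg (exp_pos _).le (div_nonneg (by linarith [hineq s hs.1.le]) (by positivity))

theorem sqrt_le_logistic_of_logistic_inequality (hκ : 0 ≤ κ)
    (hD : ∀ t, 0 ≤ t → HasDerivAt f (D t) t)
    (hineq : ∀ t, 0 ≤ t → D t ≤ -2 * κ * (1 - 2 * √(f t)) * √(f t) ^ 2)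
    (h0 : √(f 0) < 1 / 2) :
    ∀ t, 0 ≤ t → √(f t) ≤ √(f 0) / (2 * ((1 / 2 - √(f 0)) * exp (κ * t) + √(f 0))) := by
  intro t ht
  have hE : 1 ≤ exp (κ * t) := one_le_exp (mul_nonneg hκ ht)
  have hden : 0 < 2 * ((1 / 2 - √(f 0)) * exp (κ * t) + √(f 0)) := by
    nlinarith [sqrt_nonneg (f 0)]
  rcases le_or_gt (f t) 0 with hft | hft
  · rw [sqrt_eq_zero'.2 hft]
    exact div_nonneg (sqrt_nonneg _) hden.le
  have hanti := antitoneOn_of_logistic_inequality hκ hD hineq h0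
  have hpos : ∀ s ∈ Icc 0 t, 0 < f s := fun s hs => hft.trans_le (hanti hs.1 ht hs.2)
  have hmono := monotoneOn_exp_mul_inv_sqrt_sub_two hD hineq hpos
    (left_mem_Icc.2 ht) (right_mem_Icc.2 ht) ht
  simp only [mul_zero, exp_zero, one_mul, neg_mul, exp_neg] at hmono
  have ha := sqrt_pos.2 (hpos 0 (left_mem_Icc.2 ht))
  have hl := sqrt_pos.2 hft
  have hgap : √(f 0) - √(f t) * (2 * ((1 / 2 - √(f 0)) * exp (κ * t) + √(f 0))) =
      exp (κ * t) * √(f 0) * √(f t) *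
        ((exp (κ * t))⁻¹ * ((√(f t))⁻¹ - 2) - ((√(f 0))⁻¹ - 2)) := by
    field_simp
    ring
  rw [le_div_iff₀ hden, ← sub_nonneg, hgap]
  exact mul_nonneg (by positivity) (sub_nonneg.2 hmono)

end LogisticInequality

theorem stmt9 (κ₀ : ℝ) (hκ : 0 < κ₀) (J I D lam : ℝ → ℝ)
    (hlam : ∀ t : ℝ, lam t = Real.sqrt (I t ^ 2 + J t ^ 2))
    (hD : ∀ t : ℝ, 0 ≤ t → HasDerivAt (fun s => J s ^ 2 + I s ^ 2) (D t) t)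
    (hineq : ∀ t : ℝ, 0 ≤ t → D t ≤ -2 * κ₀ * (1 - 2 * lam t) * lam t ^ 2)
    (h0 : lam 0 < 1 / 2) :
    ∀ t : ℝ, 0 ≤ t →
      lam t ≤ lam 0 / (2 * ((1 / 2 - lam 0) * Real.exp (κ₀ * t) + lam 0)) ∧
      lam t ≤ lam 0 ∧
      J t ^ 2 + I t ^ 2 ≤ (J 0 ^ 2 + I 0 ^ 2) * Real.exp (-2 * κ₀ * (1 - 2 * lam 0) * t) := by
  obtain rfl : lam = fun t => √(J t ^ 2 + I t ^ 2) := funext fun t => by rw [hlam, add_comm]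
  intro t ht
  exact ⟨sqrt_le_logistic_of_logistic_inequality hκ.le hD hineq h0 t ht,
    sqrt_le_sqrt (antitoneOn_of_logistic_inequality hκ.le hD hineq h0 self_mem_Ici ht ht),
    le_mul_exp_of_logistic_inequality hκ.le hD hineq h0 t ht⟩
end

section
/- Let z_j(t) = e^{iθ_j(t)} z_j(0) solve Subsystem B on C^d with unit-norm initial data, and write ⟨z_j(0), z_k(0)⟩ = R_{jk} e^{iα_{jk}} with R_{jk} ≥ 0 real. Then the phases θ_j satisfy the Kuramoto model with frustration: θ̇_j = (2κ_1/N) ∑_{k=1}^N R_{jk} sin(θ_k − θ_j + α_{jk}), θ_j(0) = 0, where R_{jk} = R_{kj} and α_{jk} = −α_{kj} (mod 2π) for all j, k. -/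
/-!
Since `⟪z, w⟫ - ⟪w, z⟫ = 2i·Im⟪z, w⟫`, Subsystem B reads `ż_j = 2iκ₁ Im⟪z_j, z_c⟫ · z_j`:
each particle is rotated by a scalar phase. Differentiating `z_j = e^{iθ_j} z_j(0)` and
cancelling the nonzero vector `z_j(0)` gives `θ̇_j = 2κ₁ Im⟪z_j, z_c⟫`, and
`Im⟪e^{iθ_j} z_j(0), e^{iθ_k} z_k(0)⟫ = R_{jk} sin(θ_k - θ_j + α_{jk})`. The relations between
`R_{jk}, α_{jk}` and `R_{kj}, α_{kj}` are conjugate symmetry of the inner product.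
-/

open Complex ComplexConjugate Set
open scoped InnerProductSpace

section PhaseDynamics

variable {E : Type*} [NormedAddCommGroup E] [InnerProductSpace ℂ E]

theorem inner_sub_inner_swap (x y : E) : ⟪x, y⟫_ℂ - ⟪y, x⟫_ℂ = (2 * (⟪x, y⟫_ℂ).im : ℝ) * I := by
  rw [← inner_conj_symm y x, sub_conj]

theorem im_inner_exp_smul_exp_smul {x y : E} {r φ : ℝ} (h : ⟪x, y⟫_ℂ = r * exp (I * φ))
    (a b : ℝ) : (⟪exp (I * a) • x, exp (I * b) • y⟫_ℂ).im = r * Real.sin (b - a + φ) := by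
  have hrot : ⟪exp (I * a) • x, exp (I * b) • y⟫_ℂ = r * exp ((b - a + φ : ℝ) * I) := by
    rw [inner_smul_left, inner_smul_right, h, ← exp_conj, map_mul, conj_I, conj_ofReal,
      mul_left_comm, ← mul_assoc, ← exp_add, mul_left_comm, ← exp_add]
    push_cast
    ring_nf
  rw [hrot, im_ofReal_mul, exp_ofReal_mul_I_im]

theorem eq_I_mul_of_hasDerivAt_exp_smul {u : ℝ → E} {θ : ℝ → ℝ} {v : E} {t θ' : ℝ} {c : ℂ}
    (hv : v ≠ 0) (hθ : HasDerivAt θ θ' t) (hu : HasDerivAt u (c • u t) t)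
    (hphase : ∀ s, t ≤ s → u s = exp (I * θ s) • v) : c = I * θ' := by
  have hrot : HasDerivAt (fun s => exp (I * θ s) • v) ((exp (I * θ t) * (I * θ')) • v) t :=
    ((hθ.ofReal_comp.const_mul I).cexp).smul_const v
  have hu' : HasDerivWithinAt (fun s => exp (I * θ s) • v) (c • u t) (Ici t) t :=
    hu.hasDerivWithinAt.congr (fun s hs => (hphase s hs).symm) (hphase t le_rfl).symm
  have heq := (uniqueDiffOn_Ici t t self_mem_Ici).eq_deriv _ hu' hrot.hasDerivWithinAt
  rw [hphase t le_rfl, smul_smul] at heq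
  have := smul_left_injective ℂ hv heq
  exact mul_right_cancel₀ (exp_ne_zero _) (by rw [this, mul_comm])

end PhaseDynamics

theorem exp_I_mul_eq_exp_neg_of_conj {r a b : ℝ} (hr : r ≠ 0)
    (h : conj ((r : ℂ) * exp (I * a)) = r * exp (I * b)) : exp (I * a) = exp (-(I * b)) := by
  rw [map_mul, conj_ofReal, ← exp_conj, map_mul, conj_I, conj_ofReal, neg_mul] at h
  rw [exp_neg, ← mul_left_cancel₀ (ofReal_ne_zero.mpr hr) h, exp_neg, inv_inv]

theorem stmt11_general (d N : ℕ) (κ₁ : ℝ)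
    (z : Fin N → ℝ → EuclideanSpace ℂ (Fin d))
    (zc : ℝ → EuclideanSpace ℂ (Fin d))
    (hzc : ∀ t : ℝ, zc t = (N : ℂ)⁻¹ • ∑ k, z k t)
    (hinit : ∀ j, ‖z j 0‖ = 1)
    (hode : ∀ (j : Fin N) (t : ℝ), 0 ≤ t → HasDerivAt (z j)
      ((κ₁ : ℂ) • (((inner ℂ (z j t) (zc t) : ℂ)
          - (inner ℂ (zc t) (z j t) : ℂ)) • z j t)) t)
    (θ : Fin N → ℝ → ℝ)
    (hθdiff : ∀ j, Differentiable ℝ (θ j))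
    (hz : ∀ (j : Fin N) (t : ℝ), 0 ≤ t →
      z j t = Complex.exp (Complex.I * θ j t) • z j 0)
    (R α : Fin N → Fin N → ℝ)
    (hR : ∀ j k, R j k = ‖(inner ℂ (z j 0) (z k 0) : ℂ)‖)
    (hα : ∀ j k, (inner ℂ (z j 0) (z k 0) : ℂ) = R j k * Complex.exp (Complex.I * α j k)) :
    (∀ (j : Fin N) (t : ℝ), 0 ≤ t →
      HasDerivAt (θ j)
        ((2 * κ₁ / N) * ∑ k, R j k * Real.sin (θ k t - θ j t + α j k)) t) ∧
    (∀ j k, R j k = R k j) ∧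
    (∀ j k, R j k ≠ 0 →
      Complex.exp (Complex.I * α j k) = Complex.exp (-(Complex.I * α k j))) := by
  have hRsymm : ∀ j k, R j k = R k j := fun j k => by rw [hR, hR, norm_inner_symm]
  refine ⟨fun j t ht => ?_, hRsymm, fun j k hjk => ?_⟩
  · have hθ := (hθdiff j t).hasDerivAt
    have hv : z j 0 ≠ 0 := norm_ne_zero_iff.mp (by rw [hinit j]; exact one_ne_zero)
    have hrate := eq_I_mul_of_hasDerivAt_exp_smul hv hθ
      (by simpa only [smul_smul] using hode j t ht) fun s hs => hz j s (ht.trans hs)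
    have him : (⟪z j t, zc t⟫_ℂ).im =
        (N : ℝ)⁻¹ * ∑ k, R j k * Real.sin (θ k t - θ j t + α j k) := by
      rw [hzc, inner_smul_right, inner_sum, ← ofReal_natCast, ← ofReal_inv, im_ofReal_mul, im_sum]
      congr 1
      refine Finset.sum_congr rfl fun k _ => ?_
      rw [hz j t ht, hz k t ht]
      exact im_inner_exp_smul_exp_smul (hα j k) _ _
    have hspeed : deriv (θ j) t = 2 * κ₁ * (⟪z j t, zc t⟫_ℂ).im := by
      apply ofReal_injective
      apply mul_left_cancel₀ I_ne_zero
      rw [← hrate, inner_sub_inner_swap]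
      push_cast
      ring
    refine hθ.congr_deriv ?_
    rw [hspeed, him]
    ring
  · exact exp_I_mul_eq_exp_neg_of_conj hjk (by rw [← hα, inner_conj_symm, hα, hRsymm k j])

theorem stmt11 (d N : ℕ) (κ₁ : ℝ)
    (z : Fin N → ℝ → EuclideanSpace ℂ (Fin d))
    (zc : ℝ → EuclideanSpace ℂ (Fin d))
    (hzc : ∀ t : ℝ, zc t = (N : ℂ)⁻¹ • ∑ k, z k t)
    (hinit : ∀ j, ‖z j 0‖ = 1)
    (hode : ∀ (j : Fin N) (t : ℝ), 0 ≤ t → HasDerivAt (z j)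
      ((κ₁ : ℂ) • (((inner ℂ (z j t) (zc t) : ℂ)
          - (inner ℂ (zc t) (z j t) : ℂ)) • z j t)) t)
    (θ : Fin N → ℝ → ℝ)
    (hθdiff : ∀ j, Differentiable ℝ (θ j))
    (hθ0 : ∀ j, θ j 0 = 0)
    (hz : ∀ (j : Fin N) (t : ℝ), 0 ≤ t →
      z j t = Complex.exp (Complex.I * θ j t) • z j 0)
    (R α : Fin N → Fin N → ℝ)
    (hR : ∀ j k, R j k = ‖(inner ℂ (z j 0) (z k 0) : ℂ)‖)
    (hα : ∀ j k, (inner ℂ (z j 0) (z k 0) : ℂ) = R j k * Complex.exp (Complex.I * α j k)) :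
    (∀ (j : Fin N) (t : ℝ), 0 ≤ t →
      HasDerivAt (θ j)
        ((2 * κ₁ / N) * ∑ k, R j k * Real.sin (θ k t - θ j t + α j k)) t) ∧
    (∀ j k, R j k = R k j) ∧
    (∀ j k, R j k ≠ 0 →
      Complex.exp (Complex.I * α j k) = Complex.exp (-(Complex.I * α k j))) :=
  stmt11_general d N κ₁ z zc hzc hinit hode θ hθdiff hz R α hR hα
end

section
/- Let z_1, ..., z_N : [0,∞) → C^d solve Subsystem B with ||z_j(t)|| = 1 for all t. Then d/dt ||z_c||² = (4κ_1/N) ∑_{j=1}^N (Im⟨z_j, z_c⟩)² ≥ 0 when κ_1 ≥ 0; in particular ||z_c|| is non-decreasing along the flow. -/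
/-!
Write `a_j = ⟨z_j, z_c⟩`, so that `⟨z_c, z_j⟩ = conj a_j`. Then `d/dt ‖z_c‖² = 2 Re ⟨z_c, ż_c⟩`, and
the `j`-th summand of `ż_c` contributes `(2κ₁/N) Re ((a_j - conj a_j) conj a_j) = (4κ₁/N) (Im a_j)²`.
Monotonicity of `‖z_c‖` then follows from the mean value theorem applied to `‖z_c‖²`.
-/

open Finset ComplexConjugate

theorem Complex.re_sub_conj_mul_conj (a : ℂ) : ((a - conj a) * conj a).re = 2 * a.im ^ 2 := by
  simp only [mul_re, sub_re, sub_im, conj_re, conj_im]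
  ring

section
variable {E ι : Type*} [NormedAddCommGroup E] [InnerProductSpace ℂ E]

theorem re_inner_sum_smul_sub_conj (w : E) (z : ι → E) (s : Finset ι) :
    (inner ℂ w (∑ j ∈ s, (inner ℂ (z j) w - inner ℂ w (z j)) • z j)).re
      = 2 * ∑ j ∈ s, (inner ℂ (z j) w).im ^ 2 := by
  rw [inner_sum, Complex.re_sum, mul_sum]
  refine sum_congr rfl fun j _ => ?_
  rw [inner_smul_right, ← inner_conj_symm w (z j)]
  exact Complex.re_sub_conj_mul_conj _

theorem hasDerivAt_norm_sq_scaled_sum [Fintype ι] (κ c : ℝ) (z : ι → ℝ → E) (zc : ℝ → E)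
    (hzc : ∀ s, zc s = (c : ℂ) • ∑ k, z k s) (t : ℝ)
    (hz : ∀ j, HasDerivAt (z j)
      ((κ : ℂ) • ((inner ℂ (z j t) (zc t) - inner ℂ (zc t) (z j t)) • z j t)) t) :
    HasDerivAt (‖zc ·‖ ^ 2) (4 * κ * c * ∑ j, (inner ℂ (z j t) (zc t)).im ^ 2) t := by
  have hzc' : HasDerivAt zc ((c : ℂ) • ∑ j,
      (κ : ℂ) • ((inner ℂ (z j t) (zc t) - inner ℂ (zc t) (z j t)) • z j t)) t :=
    ((HasDerivAt.fun_sum fun j _ => hz j).const_smul (c : ℂ)).congr_of_eventuallyEq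
      (Filter.Eventually.of_forall hzc)
  -- `HasDerivAt.norm_sq` is stated for a real inner product space
  let := InnerProductSpace.rclikeToReal ℂ E
  convert hzc'.norm_sq using 1
  rw [real_inner_eq_re_inner ℂ, ← smul_sum, smul_smul, ← Complex.ofReal_mul, inner_smul_right,
    RCLike.re_to_complex, Complex.re_ofReal_mul, re_inner_sum_smul_sub_conj]
  ring

end

theorem monotoneOn_Ici_of_hasDerivAt_nonneg {f f' : ℝ → ℝ} {a : ℝ}
    (hf : ∀ x, a ≤ x → HasDerivAt f (f' x) x) (hf' : ∀ x, a ≤ x → 0 ≤ f' x) :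
    MonotoneOn f (Set.Ici a) := by
  refine monotoneOn_of_hasDerivWithinAt_nonneg (convex_Ici a)
    (fun x hx => (hf x hx).continuousAt.continuousWithinAt)
    (fun x hx => (hf x (interior_subset hx)).hasDerivWithinAt)
    fun x hx => hf' x (interior_subset hx)

theorem stmt16_general (d N : ℕ) (κ₁ : ℝ) (hκ : 0 ≤ κ₁)
    (z : Fin N → ℝ → EuclideanSpace ℂ (Fin d))
    (zc : ℝ → EuclideanSpace ℂ (Fin d))
    (hzc : ∀ t : ℝ, zc t = (N : ℂ)⁻¹ • ∑ k, z k t)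
    (hode : ∀ (j : Fin N) (t : ℝ), 0 ≤ t → HasDerivAt (z j)
      ((κ₁ : ℂ) • (((inner ℂ (z j t) (zc t) : ℂ)
          - (inner ℂ (zc t) (z j t) : ℂ)) • z j t)) t) :
    (∀ t : ℝ, 0 ≤ t →
      HasDerivAt (fun s => ‖zc s‖ ^ 2)
        ((4 * κ₁ / N) * ∑ j, ((inner ℂ (z j t) (zc t) : ℂ)).im ^ 2) t ∧
      0 ≤ (4 * κ₁ / N) * ∑ j, ((inner ℂ (z j t) (zc t) : ℂ)).im ^ 2) ∧
    (∀ s t : ℝ, 0 ≤ s → s ≤ t → ‖zc s‖ ≤ ‖zc t‖) := by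
  have hderiv (t : ℝ) (ht : 0 ≤ t) : HasDerivAt (fun s => ‖zc s‖ ^ 2)
      ((4 * κ₁ / N) * ∑ j, ((inner ℂ (z j t) (zc t) : ℂ)).im ^ 2) t := by
    have := hasDerivAt_norm_sq_scaled_sum κ₁ (N : ℝ)⁻¹ z zc (by simpa using hzc) t
      fun j => hode j t ht
    rwa [← div_eq_mul_inv] at this
  have hnonneg (t : ℝ) : 0 ≤ (4 * κ₁ / N) * ∑ j, ((inner ℂ (z j t) (zc t) : ℂ)).im ^ 2 := by
    positivity
  have hmono := monotoneOn_Ici_of_hasDerivAt_nonneg hderiv fun t _ => hnonneg t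
  refine ⟨fun t ht => ⟨hderiv t ht, hnonneg t⟩, fun s t hs hst => ?_⟩
  exact (pow_le_pow_iff_left₀ (norm_nonneg _) (norm_nonneg _) two_ne_zero).1
    (hmono hs (hs.trans hst) hst)

theorem stmt16 (d N : ℕ) (κ₁ : ℝ) (hκ : 0 ≤ κ₁)
    (z : Fin N → ℝ → EuclideanSpace ℂ (Fin d))
    (zc : ℝ → EuclideanSpace ℂ (Fin d))
    (hzc : ∀ t : ℝ, zc t = (N : ℂ)⁻¹ • ∑ k, z k t)
    (hnorm : ∀ (j : Fin N) (t : ℝ), 0 ≤ t → ‖z j t‖ = 1)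
    (hode : ∀ (j : Fin N) (t : ℝ), 0 ≤ t → HasDerivAt (z j)
      ((κ₁ : ℂ) • (((inner ℂ (z j t) (zc t) : ℂ)
          - (inner ℂ (zc t) (z j t) : ℂ)) • z j t)) t) :
    (∀ t : ℝ, 0 ≤ t →
      HasDerivAt (fun s => ‖zc s‖ ^ 2)
        ((4 * κ₁ / N) * ∑ j, ((inner ℂ (z j t) (zc t) : ℂ)).im ^ 2) t ∧
      0 ≤ (4 * κ₁ / N) * ∑ j, ((inner ℂ (z j t) (zc t) : ℂ)).im ^ 2) ∧
    (∀ s t : ℝ, 0 ≤ s → s ≤ t → ‖zc s‖ ≤ ‖zc t‖) :=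
  stmt16_general d N κ₁ hκ z zc hzc hode
end

section
/- Let Ω be a skew-hermitian d×d complex matrix, and let {w_j} solve ẇ_j = κ_0(⟨w_j, w_j⟩ w_c − ⟨w_c, w_j⟩ w_j) + κ_1(⟨w_j, w_c⟩ − ⟨w_c, w_j⟩) w_j with w_j(0) = z_j^{in}. Define z_j(t) = e^{Ωt} w_j(t). Then {z_j} solves ż_j = Ω z_j + κ_0(⟨z_j, z_j⟩ z_c − ⟨z_c, z_j⟩ z_j) + κ_1(⟨z_j, z_c⟩ − ⟨z_c, z_j⟩) z_j with z_j(0) = z_j^{in} (solution splitting property). -/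
/-!
Since `Ω` is skew-adjoint, `U t = exp (t Ω)` is unitary: it preserves every inner product and, being
linear, maps the centroid `w_c` to `z_c`. Hence `U t` carries the right-hand side of the `w`-system
to the coupling terms of the `z`-system, and the product rule for `t ↦ U t (w_j t)` contributes the
extra drift `Ω z_j`.
-/

open NormedSpace

section

variable {𝕜 H : Type*} [RCLike 𝕜] [NormedAddCommGroup H] [InnerProductSpace 𝕜 H] [CompleteSpace H]

theorem ContinuousLinearMap.mem_skewAdjoint_of_inner_map_left {A : H →L[𝕜] H}
    (hA : ∀ u v : H, inner 𝕜 (A u) v = -inner 𝕜 u (A v)) : A ∈ skewAdjoint (H →L[𝕜] H) := by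
  rw [skewAdjoint.mem_iff, ContinuousLinearMap.star_eq_adjoint, eq_comm,
    ContinuousLinearMap.eq_adjoint_iff]
  intro u v
  simp [hA]

theorem exp_ofReal_smul_mem_unitary {A : H →L[𝕜] H} (hA : A ∈ skewAdjoint (H →L[𝕜] H)) (t : ℝ) :
    exp ((t : 𝕜) • A) ∈ unitary (H →L[𝕜] H) := by
  let +nondep : NormedAlgebra ℚ (H →L[𝕜] H) := .restrictScalars ℚ 𝕜 _
  refine exp_mem_unitary_of_mem_skewAdjoint ?_
  rw [skewAdjoint.mem_iff, star_smul, skewAdjoint.mem_iff.mp hA, RCLike.star_def,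
    RCLike.conj_ofReal, smul_neg]

end

variable {E : Type*} [NormedAddCommGroup E] [NormedSpace ℂ E] [CompleteSpace E]

theorem hasDerivAt_exp_ofReal_smul_apply (A : E →L[ℂ] E) {w : ℝ → E} {w' : E} {t : ℝ}
    (hw : HasDerivAt w w' t) :
    HasDerivAt (fun s : ℝ => exp ((s : ℂ) • A) (w s))
      (A (exp ((t : ℂ) • A) (w t)) + exp ((t : ℂ) • A) w') t := by
  have hexp : HasDerivAt (fun s : ℝ => exp ((s : ℂ) • A)) (A * exp ((t : ℂ) • A)) t := by
    simpa using! (hasDerivAt_exp_smul_const' A (t : ℂ)).scomp t Complex.ofRealCLM.hasDerivAt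
  exact ((ContinuousLinearMap.restrictScalarsL ℂ E E ℝ ℝ).hasFDerivAt.comp_hasDerivAt t
    hexp).clm_apply hw

theorem stmt19 (d N : ℕ) (κ₀ κ₁ : ℝ)
    (Ω : EuclideanSpace ℂ (Fin d) →L[ℂ] EuclideanSpace ℂ (Fin d))
    (hΩ : ∀ u v : EuclideanSpace ℂ (Fin d), (inner ℂ (Ω u) v : ℂ) = - inner ℂ u (Ω v))
    (zin : Fin N → EuclideanSpace ℂ (Fin d))
    (w : Fin N → ℝ → EuclideanSpace ℂ (Fin d))
    (wc : ℝ → EuclideanSpace ℂ (Fin d))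
    (hwc : ∀ t : ℝ, wc t = (N : ℂ)⁻¹ • ∑ k, w k t)
    (hw0 : ∀ j, w j 0 = zin j)
    (hwode : ∀ (j : Fin N) (t : ℝ), 0 ≤ t → HasDerivAt (w j)
      ((κ₀ : ℂ) • ((inner ℂ (w j t) (w j t) : ℂ) • wc t
          - (inner ℂ (wc t) (w j t) : ℂ) • w j t)
        + (κ₁ : ℂ) • (((inner ℂ (w j t) (wc t) : ℂ)
          - (inner ℂ (wc t) (w j t) : ℂ)) • w j t)) t)
    (z : Fin N → ℝ → EuclideanSpace ℂ (Fin d))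
    (hz : ∀ (j : Fin N) (t : ℝ), z j t = NormedSpace.exp ((t : ℂ) • Ω) (w j t))
    (zc : ℝ → EuclideanSpace ℂ (Fin d))
    (hzc : ∀ t : ℝ, zc t = (N : ℂ)⁻¹ • ∑ k, z k t) :
    (∀ j, z j 0 = zin j) ∧
    (∀ (j : Fin N) (t : ℝ), 0 ≤ t → HasDerivAt (z j)
      (Ω (z j t)
        + (κ₀ : ℂ) • ((inner ℂ (z j t) (z j t) : ℂ) • zc t
            - (inner ℂ (zc t) (z j t) : ℂ) • z j t)
        + (κ₁ : ℂ) • (((inner ℂ (z j t) (zc t) : ℂ)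
            - (inner ℂ (zc t) (z j t) : ℂ)) • z j t)) t) := by
  have hU (t : ℝ) : exp ((t : ℂ) • Ω) ∈ unitary _ :=
    exp_ofReal_smul_mem_unitary (Ω.mem_skewAdjoint_of_inner_map_left hΩ) t
  have hcentroid (t : ℝ) : exp ((t : ℂ) • Ω) (wc t) = zc t := by
    simp only [hwc, hzc, hz, map_smul, map_sum]
  refine ⟨fun j => ?_, fun j t ht => ?_⟩
  · rw [hz, hw0, Complex.ofReal_zero, zero_smul ℂ Ω, exp_zero, one_apply_eq_self]
  · rw [show z j = fun s : ℝ => exp ((s : ℂ) • Ω) (w j s) from funext (hz j), ← hcentroid t]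
    refine (hasDerivAt_exp_ofReal_smul_apply Ω (hwode j t ht)).congr_deriv ?_
    simp only [map_add, map_smul, map_sub,
      ContinuousLinearMap.inner_map_map_of_mem_unitary (hU t), add_assoc]
end
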